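/- In the setting of the previous statement, the translated position error of the corrupted dual quaternion error δQ_ρ = δq̄_ρ + ε(1/2)(δp̃_b^ρ ∘ δq̄_ρ) with δq̄_ρ = δq̄ ∘ q_ρ is δp̃_b^ρ = (δq̄ ∘ p̃_ρ ∘ q_ρ + δp̃_b ∘ δq̄ ∘ q_ρ) ∘ q_ρ* ∘ δq̄*; moreover δp̃_b^ρ is a pure quaternion, and if p̃_ρ = 0 then δp̃_b^ρ = δp̃_b. -/

import Mathlib

/-!
Since `q_ρ` and `δq̄` are unit quaternions, `q_ρ ∘ q_ρ* = δq̄ ∘ δq̄* = 1`, so the translated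
error collapses to `δq̄ ∘ p̃_ρ ∘ δq̄* + δp̃_b`. Conjugation by a unit quaternion preserves the real
part, which gives purity, and `p̃_ρ = 0` leaves `δp̃_b`. Multiplying the collapsed error by
`δq̄ ∘ q_ρ` recovers `δq̄ ∘ p̃_ρ ∘ q_ρ + δp̃_b ∘ δq̄ ∘ q_ρ`, twice the dual part of `δQ ∘ Q_ρ`.
-/

/-- Dual quaternions as pairs (principal part, dual part). -/
abbrev DQ := Quaternion ℝ × Quaternion ℝ

/-- Dual quaternion product: `(a + εb) ∘ (c + εd) = a∘c + ε(a∘d + b∘c)`. -/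
noncomputable def dmul (a b : DQ) : DQ := (a.1 * b.1, a.1 * b.2 + a.2 * b.1)

open Quaternion

namespace Quaternion

theorem re_mul_mul_star {R : Type*} [CommRing R] (a b : ℍ[R]) :
    (a * b * star a).re = normSq a * b.re := by
  simp only [re_mul, normSq_def', imI_mul, imJ_mul, imK_mul, re_star, imI_star, imJ_star, imK_star]
  ring

theorem mul_star_eq_one_of_norm_eq_one {q : ℍ[ℝ]} (hq : ‖q‖ = 1) : q * star q = 1 := by
  rw [self_mul_star, normSq_eq_norm_mul_self, hq]
  simp

theorem star_mul_eq_one_of_norm_eq_one {q : ℍ[ℝ]} (hq : ‖q‖ = 1) : star q * q = 1 := by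
  rw [star_mul_self, normSq_eq_norm_mul_self, hq]
  simp

theorem commute_half (x : ℍ[ℝ]) : Commute (1 / 2 : ℍ[ℝ]) x :=
  (Commute.one_left x).div_left (Commute.ofNat_left 2 x)

end Quaternion

theorem corrupted_error_eq_conj_add {δq qρ : ℍ[ℝ]} (hδq : ‖δq‖ = 1) (hqρ : ‖qρ‖ = 1)
    (δp pρ : ℍ[ℝ]) :
    (δq * pρ * qρ + δp * δq * qρ) * star qρ * star δq = δq * pρ * star δq + δp := by
  rw [← add_mul, mul_assoc _ qρ, mul_star_eq_one_of_norm_eq_one hqρ, mul_one, add_mul,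
    mul_assoc δp, mul_star_eq_one_of_norm_eq_one hδq, mul_one]

theorem dmul_snd_eq_half_mul {δq : ℍ[ℝ]} (hδq : ‖δq‖ = 1) (qρ δp pρ : ℍ[ℝ]) :
    (dmul (δq, (1 / 2 : ℍ[ℝ]) * (δp * δq)) (qρ, (1 / 2 : ℍ[ℝ]) * (pρ * qρ))).2 =
      (1 / 2 : ℍ[ℝ]) * ((δq * pρ * star δq + δp) * (δq * qρ)) := by
  have hcancel : δq * pρ * star δq * (δq * qρ) = δq * pρ * qρ := by
    rw [mul_assoc (δq * pρ), ← mul_assoc (star δq), star_mul_eq_one_of_norm_eq_one hδq, one_mul]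
  rw [dmul, add_mul, hcancel, ← (commute_half δq).left_comm]
  noncomm_ring

/-- The translated position error of the corrupted dual quaternion error
`δQ_ρ = δq̄_ρ + ε(1/2)(δp̃_b^ρ ∘ δq̄_ρ)`, `δq̄_ρ = δq̄ ∘ q_ρ`, is
`δp̃_b^ρ = (δq̄ ∘ p̃_ρ ∘ q_ρ + δp̃_b ∘ δq̄ ∘ q_ρ) ∘ q_ρ* ∘ δq̄*`; it is a pure
quaternion, and if `p̃_ρ = 0` then `δp̃_b^ρ = δp̃_b`. -/
theorem corrupted_position_error (δq qρ δp pρ : Quaternion ℝ)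
    (hδq : ‖δq‖ = 1) (hqρ : ‖qρ‖ = 1) (hδp : δp.re = 0) (hpρ : pρ.re = 0) :
    ((δq * pρ * qρ + δp * δq * qρ) * star qρ * star δq).re = 0
    ∧ (dmul (δq, (1 / 2 : Quaternion ℝ) * (δp * δq))
        (qρ, (1 / 2 : Quaternion ℝ) * (pρ * qρ))).2 =
          (1 / 2 : Quaternion ℝ) *
            (((δq * pρ * qρ + δp * δq * qρ) * star qρ * star δq) * (δq * qρ))
    ∧ (pρ = 0 → (δq * pρ * qρ + δp * δq * qρ) * star qρ * star δq = δp) := by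
  rw [corrupted_error_eq_conj_add hδq hqρ]
  refine ⟨?_, dmul_snd_eq_half_mul hδq qρ δp pρ, fun hpρ0 => by simp [hpρ0]⟩
  rw [re_add, re_mul_mul_star, hpρ, hδp, mul_zero, add_zero]
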